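/- Given a directed graph G = (V,F) with nodes s, t ∈ V, distinct variables p_v for v ∈ V, W = {p_s}, and D = {(p_u : p_u / p_v) | (u,v) ∈ F}, the default theory ⟨W,D⟩ has a unique stable extension E, and p_t ∈ E if and only if t is reachable from s in G. -/

import Mathlib

inductive Form : Type where
  | var : ℕ → Form
  | app : (n : ℕ) → ((Fin n → Bool) → Bool) → (Fin n → Form) → Form

namespace Form

def eval (σ : ℕ → Bool) : Form → Bool
  | var x => σ x
  | app _ f a => f (fun i => (a i).eval σ)

def tru : Form := app 0 (fun _ => true) (fun i => i.elim0)
def fls : Form := app 0 (fun _ => false) (fun i => i.elim0)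
def neg (φ : Form) : Form := app 1 (fun v => !(v 0)) (fun _ => φ)
def conj (φ ψ : Form) : Form := app 2 (fun v => v 0 && v 1) ![φ, ψ]
def disj (φ ψ : Form) : Form := app 2 (fun v => v 0 || v 1) ![φ, ψ]

end Form

/-- σ satisfies all formulae of A. -/
def Sat (σ : ℕ → Bool) (A : Set Form) : Prop := ∀ φ ∈ A, φ.eval σ = true

/-- Semantic consequence A ⊨ φ. -/
def Entails (A : Set Form) (φ : Form) : Prop := ∀ σ, Sat σ A → φ.eval σ = true

/-- Th(A) = {φ | A ⊨ φ}. -/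
def Th (A : Set Form) : Set Form := {φ | Entails A φ}

def Consistent (A : Set Form) : Prop := ∃ σ, Sat σ A

/-- A default rule (α : β / γ). -/
structure Default where
  pre : Form
  just : Form
  con : Form

/-- S contains W, is deductively closed, and closed under defaults applicable w.r.t. E. -/
def GammaClosed (W : Set Form) (D : Set Default) (E S : Set Form) : Prop :=
  W ⊆ S ∧ Th S = S ∧ ∀ d ∈ D, d.pre ∈ S → Form.neg d.just ∉ E → d.con ∈ S

/-- Γ(E): the smallest set satisfying the three closure conditions. -/
def Gamma (W : Set Form) (D : Set Default) (E : Set Form) : Set Form :=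
  ⋂₀ {S | GammaClosed W D E S}

/-- E is a stable extension of ⟨W,D⟩. -/
def Stable (W : Set Form) (D : Set Default) (E : Set Form) : Prop :=
  Gamma W D E = E

/-!
Every formula involved is true under the all-true valuation, so the set of formulae true under
it is deductively closed, contains `W` and is closed under every default. Hence every `Γ(E)`
lies inside it and contains no negated justification, so for `E` of that kind the
justifications block nothing and `Γ(E) = Γ(∅)`: the unique stable extension is `Γ(∅)`.
Evaluating `Γ(∅)` under the valuation that makes exactly the `p_v` with `v` reachable from `s`
true shows that it contains `p_t` only for reachable `t`.
-/

lemma subset_Th (A : Set Form) : A ⊆ Th A := fun φ hφ _ hσ => hσ φ hφ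

def modelSet (σ : ℕ → Bool) : Set Form := {φ | φ.eval σ = true}

lemma Th_modelSet (σ : ℕ → Bool) : Th (modelSet σ) = modelSet σ :=
  Set.Subset.antisymm (fun _ hφ => hφ σ fun _ hψ => hψ) (subset_Th _)

lemma neg_notMem_modelSet {σ : ℕ → Bool} {φ : Form} (hφ : φ.eval σ = true) :
    Form.neg φ ∉ modelSet σ := by
  simp [modelSet, Form.neg, Form.eval, hφ]

section Gamma

variable {W : Set Form} {D : Set Default} {E S : Set Form}

lemma Gamma_subset (h : GammaClosed W D E S) : Gamma W D E ⊆ S :=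
  Set.sInter_subset_of_mem h

lemma gammaClosed_modelSet {σ : ℕ → Bool} (hW : Sat σ W)
    (hD : ∀ d ∈ D, d.pre.eval σ = true → d.con.eval σ = true) :
    GammaClosed W D E (modelSet σ) :=
  ⟨hW, Th_modelSet σ, fun d hd hpre _ => hD d hd hpre⟩

lemma gammaClosed_iff_empty (hE : ∀ d ∈ D, Form.neg d.just ∉ E) :
    GammaClosed W D E S ↔ GammaClosed W D ∅ S := by
  simp only [GammaClosed, Set.notMem_empty, not_false_eq_true, true_implies]
  exact and_congr_right' <| and_congr_right' <|
    forall₂_congr fun d hd => by simp only [hE d hd, not_false_eq_true, true_implies]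

lemma Gamma_eq_Gamma_empty (hE : ∀ d ∈ D, Form.neg d.just ∉ E) :
    Gamma W D E = Gamma W D ∅ := by
  simp only [Gamma, gammaClosed_iff_empty hE]

theorem stable_iff_eq_Gamma_empty {σ : ℕ → Bool} (hW : Sat σ W)
    (hD : ∀ d ∈ D, d.just.eval σ = true ∧ d.con.eval σ = true) :
    Stable W D E ↔ E = Gamma W D ∅ := by
  have hModel : ∀ E', Gamma W D E' ⊆ modelSet σ := fun _ =>
    Gamma_subset (gammaClosed_modelSet hW fun d hd _ => (hD d hd).2)
  have hUnblocked : ∀ E' ⊆ modelSet σ, Gamma W D E' = Gamma W D ∅ := fun _ hE' =>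
    Gamma_eq_Gamma_empty fun d hd h => neg_notMem_modelSet (hD d hd).1 (hE' h)
  constructor
  · intro hE
    rw [← hE, hUnblocked E (hE ▸ hModel E)]
  · rintro rfl
    exact hUnblocked _ (hModel ∅)

theorem existsUnique_stable {σ : ℕ → Bool} (hW : Sat σ W)
    (hD : ∀ d ∈ D, d.just.eval σ = true ∧ d.con.eval σ = true) :
    ∃! E, Stable W D E :=
  ⟨_, (stable_iff_eq_Gamma_empty hW hD).2 rfl, fun _ h => (stable_iff_eq_Gamma_empty hW hD).1 h⟩

end Gamma

section Graph

variable {V : Type} (F : Set (V × V)) (p : V → ℕ)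

def edgeDefaults : Set Default :=
  {d | ∃ e ∈ F, d = ⟨Form.var (p e.1), Form.var (p e.1), Form.var (p e.2)⟩}

variable {F p}

lemma var_mem_of_reflTransGen {s t : V} {S : Set Form}
    (hS : GammaClosed {Form.var (p s)} (edgeDefaults F p) ∅ S)
    (hst : Relation.ReflTransGen (fun u v => (u, v) ∈ F) s t) : Form.var (p t) ∈ S := by
  induction hst with
  | refl => exact hS.1 rfl
  | tail _ huv ih => exact hS.2.2 _ ⟨_, huv, rfl⟩ ih (Set.notMem_empty _)

lemma reflTransGen_of_var_mem_Gamma (hp : Function.Injective p) {s t : V}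
    (ht : Form.var (p t) ∈ Gamma {Form.var (p s)} (edgeDefaults F p) ∅) :
    Relation.ReflTransGen (fun u v => (u, v) ∈ F) s t := by
  classical
  let reached : ℕ → Bool := fun x =>
    decide (∃ w, Relation.ReflTransGen (fun u v => (u, v) ∈ F) s w ∧ p w = x)
  have hClosed : GammaClosed {Form.var (p s)} (edgeDefaults F p) ∅ (modelSet reached) := by
    refine gammaClosed_modelSet ?_ ?_
    · rintro _ rfl
      simp only [Form.eval, reached, decide_eq_true_eq]
      exact ⟨s, .refl, rfl⟩
    · rintro _ ⟨⟨u, v⟩, huv, rfl⟩ hu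
      obtain ⟨w, hw, hwu⟩ := by simpa [Form.eval, reached] using hu
      simp only [Form.eval, reached, decide_eq_true_eq]
      exact ⟨v, (hp hwu ▸ hw).tail huv, rfl⟩
  obtain ⟨w, hw, hwt⟩ := by simpa [modelSet, Form.eval, reached] using Gamma_subset hClosed ht
  exact hp hwt ▸ hw

theorem var_mem_Gamma_iff (hp : Function.Injective p) {s t : V} :
    Form.var (p t) ∈ Gamma {Form.var (p s)} (edgeDefaults F p) ∅ ↔
      Relation.ReflTransGen (fun u v => (u, v) ∈ F) s t :=
  ⟨reflTransGen_of_var_mem_Gamma hp, fun hst =>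
    Set.mem_sInter.2 fun _ hS => var_mem_of_reflTransGen hS hst⟩

lemma edgeDefaults_true (d : Default) (hd : d ∈ edgeDefaults F p) :
    d.just.eval (fun _ => true) = true ∧ d.con.eval (fun _ => true) = true := by
  obtain ⟨e, -, rfl⟩ := hd
  exact ⟨rfl, rfl⟩

end Graph

theorem stmt13_general (V : Type) (F : Set (V × V)) (s t : V)
    (p : V → ℕ) (hp : Function.Injective p) :
    (∃! E : Set Form,
        Stable {Form.var (p s)}
          {d | ∃ e ∈ F, d = ⟨Form.var (p e.1), Form.var (p e.1), Form.var (p e.2)⟩} E) ∧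
    ∀ E : Set Form,
      Stable {Form.var (p s)}
        {d | ∃ e ∈ F, d = ⟨Form.var (p e.1), Form.var (p e.1), Form.var (p e.2)⟩} E →
      (Form.var (p t) ∈ E ↔ Relation.ReflTransGen (fun u v => (u, v) ∈ F) s t) := by
  have hW : Sat (fun _ => true) {Form.var (p s)} := by
    rintro _ rfl
    rfl
  refine ⟨existsUnique_stable hW edgeDefaults_true, fun E hE => ?_⟩
  rw [(stable_iff_eq_Gamma_empty hW edgeDefaults_true).1 hE]
  exact var_mem_Gamma_iff hp

/-- The graph default theory has a unique stable extension E, and p_t ∈ E iff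
t is reachable from s. -/
theorem stmt13 (V : Type) (F : Set (V × V)) (hF : F.Finite) (s t : V)
    (p : V → ℕ) (hp : Function.Injective p) :
    (∃! E : Set Form,
        Stable {Form.var (p s)}
          {d | ∃ e ∈ F, d = ⟨Form.var (p e.1), Form.var (p e.1), Form.var (p e.2)⟩} E) ∧
    ∀ E : Set Form,
      Stable {Form.var (p s)}
        {d | ∃ e ∈ F, d = ⟨Form.var (p e.1), Form.var (p e.1), Form.var (p e.2)⟩} E →
      (Form.var (p t) ∈ E ↔ Relation.ReflTransGen (fun u v => (u, v) ∈ F) s t) :=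
  stmt13_general V F s t p hp
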